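/- arXiv:1411.1119 — 3 statements merged into one kernel-verified Lean document; each statement's English description precedes it below -/
import Mathlib

section
/- For vectors x, y ∈ R^n, sup over s ∈ R^n of ‖sig(x+s) − sig(y+s)‖₁ is at most 2|2a − 1|, where a = σ((1/2)·range(y − x)), σ is the logistic sigmoid, and range(z) = max_i z_i − min_i z_i. -/
noncomputable def sig {n : ℕ} (v : Fin n → ℝ) : Fin n → ℝ :=
  fun i => Real.exp (v i) / ∑ j, Real.exp (v j)

noncomputable def logisticSigmoid (t : ℝ) : ℝ := Real.exp t / (1 + Real.exp t)

/-! Softmax is invariant under adding a constant, so `sig (y + s) = sig (u + d)` with `u = x + s`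
and `d = y - x - min (y - x) ∈ [0, R]`, `R = range (y - x)`. With `p = sig u` and `w = exp ∘ d`
we get `sig (u + d) = p w / W` for `W = ∑ p w`, so `‖p - sig (u + d)‖₁ = 𝔼_p |w - W| / W`.
Since `|· - W|` lies below its chord on `[a, b]`, a variable with values in `[a, b]` and mean `W`
has mean absolute deviation at most `2 (W - a) (b - W) / (b - a)`. For `[a, b] = [1, e ^ R]`,
AM-GM in `W` bounds this by `2 W (e ^ (R / 2) - 1) ^ 2 / (e ^ R - 1)`, giving
`‖p - sig (u + d)‖₁ ≤ 2 tanh (R / 4) = 2 (2 σ (R / 2) - 1)`. -/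

open Finset Real Set

theorem abs_sub_mul_le_of_mem_Icc {a b w W : ℝ} (hw : w ∈ Icc a b) (hW : W ∈ Icc a b) :
    |w - W| * (b - a) ≤ (w - a) * (b - W) + (b - w) * (W - a) := by
  obtain ⟨hw₁, hw₂⟩ := hw
  obtain ⟨hW₁, hW₂⟩ := hW
  rcases abs_cases (w - W) with ⟨h, _⟩ | ⟨h, _⟩ <;> rw [h] <;> nlinarith

theorem mul_sum_abs_sub_le_of_mem_Icc {ι : Type*} (s : Finset ι) {p w : ι → ℝ} {a b : ℝ}
    (hp : ∀ i ∈ s, 0 ≤ p i) (hp₁ : ∑ i ∈ s, p i = 1) (hw : ∀ i ∈ s, w i ∈ Icc a b) :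
    (b - a) * ∑ i ∈ s, p i * |w i - ∑ j ∈ s, p j * w j| ≤
      2 * (∑ j ∈ s, p j * w j - a) * (b - ∑ j ∈ s, p j * w j) := by
  set W := ∑ j ∈ s, p j * w j with hW_def
  have hW : W ∈ Icc a b := by
    constructor
    · calc a = ∑ i ∈ s, p i * a := by rw [← sum_mul, hp₁, one_mul]
        _ ≤ W := sum_le_sum fun i hi => mul_le_mul_of_nonneg_left (hw i hi).1 (hp i hi)
    · calc W ≤ ∑ i ∈ s, p i * b :=
            sum_le_sum fun i hi => mul_le_mul_of_nonneg_left (hw i hi).2 (hp i hi)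
        _ = b := by rw [← sum_mul, hp₁, one_mul]
  calc (b - a) * ∑ i ∈ s, p i * |w i - W|
      = ∑ i ∈ s, p i * (|w i - W| * (b - a)) := by
        rw [mul_sum]; exact sum_congr rfl fun i _ => by ring
    _ ≤ ∑ i ∈ s, p i * ((w i - a) * (b - W) + (b - w i) * (W - a)) :=
        sum_le_sum fun i hi =>
          mul_le_mul_of_nonneg_left (abs_sub_mul_le_of_mem_Icc (hw i hi) hW) (hp i hi)
    _ = (∑ i ∈ s, p i * w i) * (a + b - 2 * W) + (a * W + b * W - 2 * a * b) * ∑ i ∈ s, p i := by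
        rw [sum_mul, mul_sum s p, ← sum_add_distrib]
        exact sum_congr rfl fun i _ => by ring
    _ = 2 * (W - a) * (b - W) := by rw [← hW_def, hp₁]; ring

theorem sig_add_const {n : ℕ} (v : Fin n → ℝ) (c : ℝ) : sig (fun i => v i + c) = sig v := by
  funext i
  simp only [sig, exp_add, ← sum_mul]
  exact mul_div_mul_right _ _ (exp_ne_zero c)

theorem sum_sig {n : ℕ} [NeZero n] (v : Fin n → ℝ) : ∑ i, sig v i = 1 := by
  simp only [sig]
  rw [← sum_div, div_self (sum_pos (fun j _ => exp_pos (v j)) univ_nonempty).ne']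

theorem sig_pos {n : ℕ} (v : Fin n → ℝ) (i : Fin n) : 0 < sig v i :=
  div_pos (exp_pos _) (sum_pos (fun j _ => exp_pos (v j)) ⟨i, mem_univ i⟩)

theorem sig_add_apply {n : ℕ} (u d : Fin n → ℝ) (i : Fin n) :
    sig (fun j => u j + d j) i = sig u i * exp (d i) / ∑ j, sig u j * exp (d j) := by
  have hZ : ∑ j, exp (u j) ≠ 0 := (sum_pos (fun j _ => exp_pos (u j)) ⟨i, mem_univ i⟩).ne'
  simp only [sig, exp_add, div_mul_eq_mul_div, ← sum_div]
  field_simp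

theorem sum_abs_sig_sub_sig_add_le {n : ℕ} [NeZero n] (u d : Fin n → ℝ) {R : ℝ}
    (hd : ∀ i, d i ∈ Icc 0 R) :
    ∑ i, |sig u i - sig (fun i => u i + d i) i| ≤ 2 * (exp (R / 2) - 1) / (exp (R / 2) + 1) := by
  have hR₀ : 0 ≤ R := (hd ⟨0, Nat.pos_of_neZero n⟩).1.trans (hd _).2
  rcases hR₀.eq_or_lt with rfl | hR
  · have hd₀ : (fun i => u i + d i) = u := funext fun i => by
      simp [le_antisymm (hd i).2 (hd i).1]
    simp [hd₀]
  set c := exp (R / 2)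
  have hc : 1 < c := one_lt_exp_iff.2 (by positivity)
  have hc₂ : exp R = c ^ 2 := by rw [sq, ← exp_add, add_halves]
  set p := sig u
  set W := ∑ j, p j * exp (d j) with hW_def
  have hW : 0 < W := sum_pos (fun i _ => mul_pos (sig_pos u i) (exp_pos _)) univ_nonempty
  have hw : ∀ i ∈ Finset.univ, exp (d i) ∈ Icc 1 (c ^ 2) := fun i _ =>
    ⟨one_le_exp (hd i).1, hc₂ ▸ exp_le_exp.2 (hd i).2⟩
  have hdev := mul_sum_abs_sub_le_of_mem_Icc univ (fun i _ => (sig_pos u i).le) (sum_sig u) hw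
  have hl₁ : ∑ i, |p i - sig (fun i => u i + d i) i| = (∑ i, p i * |exp (d i) - W|) / W := by
    rw [sum_div]
    refine sum_congr rfl fun i _ => ?_
    rw [sig_add_apply, ← hW_def, show p i - p i * exp (d i) / W = p i * (W - exp (d i)) / W by
      field_simp, abs_div, abs_mul, abs_of_pos (sig_pos u i), abs_of_pos hW, abs_sub_comm]
  have hamgm : (W - 1) * (c ^ 2 - W) ≤ W * (c - 1) ^ 2 := by nlinarith [sq_nonneg (W - c)]
  rw [hl₁, div_le_div_iff₀ hW (by positivity)]
  refine le_of_mul_le_mul_left ?_ (sub_pos.2 hc)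
  nlinarith

theorem abs_two_mul_logisticSigmoid_sub_one {t : ℝ} (ht : 0 ≤ t) :
    |2 * logisticSigmoid t - 1| = (exp t - 1) / (exp t + 1) := by
  have h : 2 * logisticSigmoid t - 1 = (exp t - 1) / (exp t + 1) := by
    rw [logisticSigmoid]
    field_simp
    ring
  rw [h, abs_of_nonneg (div_nonneg (by linarith [one_le_exp ht]) (by positivity))]

/-- The sup over shifts s of the ℓ₁ distance of shifted softmaxes is at most 2|2a-1|,
with a = σ(range(y - x)/2). -/
theorem softmax_shift_l1_diff_le (n : ℕ) [NeZero n] (x y : Fin n → ℝ) :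
    ∀ s : Fin n → ℝ,
      ∑ i, |sig (fun i => x i + s i) i - sig (fun i => y i + s i) i| ≤
        2 * |2 * logisticSigmoid ((1 / 2) *
          (Finset.univ.sup' Finset.univ_nonempty (fun i => y i - x i) -
           Finset.univ.inf' Finset.univ_nonempty (fun i => y i - x i))) - 1| := by
  intro s
  set M := univ.sup' univ_nonempty fun i => y i - x i
  set m := univ.inf' univ_nonempty fun i => y i - x i
  have hd : ∀ i, y i - x i - m ∈ Icc 0 (M - m) := fun i =>
    ⟨sub_nonneg.2 (inf'_le _ (mem_univ i)),
      sub_le_sub_right (le_sup' (fun i => y i - x i) (mem_univ i)) m⟩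
  have hy : sig (fun i => y i + s i) = sig (fun i => x i + s i + (y i - x i - m)) := by
    rw [← sig_add_const (fun i => x i + s i + (y i - x i - m)) m]
    congr 1; funext i; ring
  have hR : 0 ≤ (1 / 2) * (M - m) :=
    mul_nonneg one_half_pos.le ((hd ⟨0, Nat.pos_of_neZero n⟩).1.trans (hd _).2)
  rw [hy, abs_two_mul_logisticSigmoid_sub_one hR, ← mul_div_assoc, one_div_mul_eq_div]
  exact sum_abs_sig_sub_sig_add_le _ _ hd
end

section
/- For n = 2, and x, y ∈ R², sup over s ∈ R² of ‖sig(x+s) − sig(y+s)‖₁ equals 2|2σ((1/2)range(y−x)) − 1|. -/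
/-!
In two dimensions `sig v = (σ(v₀ - v₁), 1 - σ(v₀ - v₁))`, so the ℓ₁ distance is
`2 |σ a - σ (a - c)|`, where the shift only moves `a` and `c = (x₀ - x₁) - (y₀ - y₁)` is fixed.
Writing `a = m + d`, `a - c = m - d` with `d = c / 2`, the difference `σ (m + d) - σ (m - d)` is
`σ d - σ (-d)` times a factor in `[0, 1]` equal to `1` at `m = 0`; that is the supremum.
-/

open Real

theorem logisticSigmoid_neg (t : ℝ) : logisticSigmoid (-t) = 1 - logisticSigmoid t := by
  unfold logisticSigmoid
  rw [exp_neg]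
  field_simp
  ring

theorem sig_fin_two_zero (v : Fin 2 → ℝ) : sig v 0 = logisticSigmoid (v 0 - v 1) := by
  unfold sig logisticSigmoid
  rw [Fin.sum_univ_two, exp_sub]
  field_simp
  ring

theorem sig_fin_two_one (v : Fin 2 → ℝ) : sig v 1 = 1 - sig v 0 := by
  unfold sig
  rw [Fin.sum_univ_two]
  field_simp
  ring

theorem sum_abs_sig_sub_sig_fin_two (v w : Fin 2 → ℝ) :
    ∑ i, |sig v i - sig w i| =
      2 * |logisticSigmoid (v 0 - v 1) - logisticSigmoid (w 0 - w 1)| := by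
  rw [Fin.sum_univ_two, sig_fin_two_one v, sig_fin_two_one w, ← sig_fin_two_zero,
    ← sig_fin_two_zero, sub_sub_sub_cancel_left, abs_sub_comm (sig w 0)]
  ring

theorem logisticSigmoid_add_sub_logisticSigmoid_sub (m d : ℝ) :
    logisticSigmoid (m + d) - logisticSigmoid (m - d) =
      (logisticSigmoid d - logisticSigmoid (-d)) *
        (exp m * (exp d + 1) ^ 2 / ((1 + exp m * exp d) * (exp m + exp d))) := by
  unfold logisticSigmoid
  rw [exp_add, exp_sub, exp_neg]
  field_simp
  ring

theorem abs_logisticSigmoid_add_sub_logisticSigmoid_sub_le (m d : ℝ) :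
    |logisticSigmoid (m + d) - logisticSigmoid (m - d)| ≤
      |logisticSigmoid d - logisticSigmoid (-d)| := by
  have ha := exp_pos m
  have hb := exp_pos d
  have hfactor : exp m * (exp d + 1) ^ 2 / ((1 + exp m * exp d) * (exp m + exp d)) ≤ 1 := by
    rw [div_le_one (by positivity)]
    -- the gap is `exp d * (exp m - 1) ^ 2`
    nlinarith [mul_nonneg hb.le (sq_nonneg (exp m - 1))]
  rw [logisticSigmoid_add_sub_logisticSigmoid_sub, abs_mul,
    abs_of_nonneg (by positivity : (0 : ℝ) ≤ _ / _)]
  exact mul_le_of_le_one_right (abs_nonneg _) hfactor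

theorem abs_two_mul_logisticSigmoid_abs_sub_one (d : ℝ) :
    |2 * logisticSigmoid |d| - 1| = |logisticSigmoid d - logisticSigmoid (-d)| := by
  rcases abs_choice d with h | h <;> rw [h, logisticSigmoid_neg]
  · ring_nf
  · rw [← abs_neg]
    ring_nf

/-- In two dimensions, the sup over shifts of the ℓ₁ softmax difference equals
2|2σ(range(y-x)/2) - 1|. -/
theorem softmax_shift_l1_diff_sup_two (x y : Fin 2 → ℝ) :
    IsLUB {t : ℝ | ∃ s : Fin 2 → ℝ,
        t = ∑ i, |sig (fun i => x i + s i) i - sig (fun i => y i + s i) i|}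
      (2 * |2 * logisticSigmoid ((1 / 2) *
        (max (y 0 - x 0) (y 1 - x 1) - min (y 0 - x 0) (y 1 - x 1))) - 1|) := by
  set c := (x 0 - x 1) - (y 0 - y 1)
  have hrange : (1 / 2) * (max (y 0 - x 0) (y 1 - x 1) - min (y 0 - x 0) (y 1 - x 1)) =
      |c / 2| := by
    rw [max_sub_min_eq_abs, abs_div, abs_two, show y 1 - x 1 - (y 0 - x 0) = c by ring]
    ring
  rw [hrange, abs_two_mul_logisticSigmoid_abs_sub_one]
  refine ⟨?_, fun b hb => hb ⟨![c / 2 - (x 0 - x 1), 0], ?_⟩⟩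
  · rintro _ ⟨s, rfl⟩
    have h := abs_logisticSigmoid_add_sub_logisticSigmoid_sub_le
      (x 0 + s 0 - (x 1 + s 1) - c / 2) (c / 2)
    rw [sub_add_cancel, show x 0 + s 0 - (x 1 + s 1) - c / 2 - c / 2 = y 0 + s 0 - (y 1 + s 1)
      by ring] at h
    rw [sum_abs_sig_sub_sig_fin_two]
    linarith
  · rw [sum_abs_sig_sub_sig_fin_two]
    simp only [Matrix.cons_val_zero, Matrix.cons_val_one]
    rw [show x 0 + (c / 2 - (x 0 - x 1)) - (x 1 + 0) = c / 2 by ring,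
      show y 0 + (c / 2 - (x 0 - x 1)) - (y 1 + 0) = -(c / 2) by ring]
end

section
/- For a ∈ R^n with ‖a‖₁ > c > 0, the Euclidean projection of a onto the ℓ₁-ball {z : ‖z‖₁ ≤ c} is given by soft-thresholding: z_i = sign(a_i)·max(|a_i| − t, 0), where t > 0 is the unique value with ∑_i max(|a_i| − t, 0) = c. Moreover the projection preserves sparsity: if a_i = 0 then z_i = 0. -/
/-!
Soft-thresholding at level `t` is the proximal map of `t |·|`: the residual `r = a - z` satisfies
`|rᵢ| ≤ t` and `rᵢ zᵢ = t |zᵢ|`, i.e. `r` is `t` times a subgradient of `‖·‖₁` at `z`. Hence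
`⟪r, w - z⟫ ≤ t (‖w‖₁ - ‖z‖₁) ≤ 0` for every `w` in the ball, since `‖z‖₁ = c` by the choice of `t`,
and this obtuse-angle condition makes `z` the nearest point of the ball to `a`.
-/

open Finset

namespace Real

noncomputable def softThreshold (t x : ℝ) : ℝ := Real.sign x * max (|x| - t) 0

variable {t : ℝ}

theorem softThreshold_zero (t : ℝ) : softThreshold t 0 = 0 := by
  simp [softThreshold]

theorem abs_softThreshold (ht : 0 ≤ t) (x : ℝ) : |softThreshold t x| = max (|x| - t) 0 := by
  rcases lt_trichotomy x 0 with hx | rfl | hx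
  · simp [softThreshold, Real.sign_of_neg hx]
  · simp [softThreshold, ht]
  · simp [softThreshold, Real.sign_of_pos hx]

theorem softThreshold_of_le (ht : 0 ≤ t) {x : ℝ} (hx : t ≤ x) : softThreshold t x = x - t := by
  rcases ht.lt_or_eq with ht | rfl
  · simp [softThreshold, Real.sign_of_pos (ht.trans_le hx), abs_of_pos (ht.trans_le hx), hx]
  · rcases hx.lt_or_eq with hx | rfl
    · simp [softThreshold, Real.sign_of_pos hx, abs_of_pos hx, hx.le]
    · simp [softThreshold]

theorem softThreshold_of_le_neg (ht : 0 ≤ t) {x : ℝ} (hx : x ≤ -t) :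
    softThreshold t x = x + t := by
  have h := softThreshold_of_le ht (le_neg_of_le_neg hx)
  simp only [softThreshold, Real.sign_neg, abs_neg] at h ⊢
  linarith

theorem softThreshold_of_abs_le {x : ℝ} (hx : |x| ≤ t) : softThreshold t x = 0 := by
  simp [softThreshold, hx]

theorem abs_sub_softThreshold_le (ht : 0 ≤ t) (x : ℝ) : |x - softThreshold t x| ≤ t := by
  rcases le_or_gt t x with h | h
  · simp [softThreshold_of_le ht h, abs_of_nonneg ht]
  rcases le_or_gt x (-t) with h' | h'
  · simp [softThreshold_of_le_neg ht h', abs_of_nonneg ht]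
  · rw [softThreshold_of_abs_le (abs_le.2 ⟨h'.le, h.le⟩), sub_zero]
    exact abs_le.2 ⟨h'.le, h.le⟩

theorem sub_softThreshold_mul_softThreshold (ht : 0 ≤ t) (x : ℝ) :
    (x - softThreshold t x) * softThreshold t x = t * |softThreshold t x| := by
  rcases le_or_gt t x with h | h
  · rw [softThreshold_of_le ht h, abs_of_nonneg (sub_nonneg.2 h)]; ring
  rcases le_or_gt x (-t) with h' | h'
  · rw [softThreshold_of_le_neg ht h', abs_of_nonpos (by linarith)]; ring
  · simp [softThreshold_of_abs_le (abs_le.2 ⟨h'.le, h.le⟩)]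

theorem sub_softThreshold_mul_sub_le (ht : 0 ≤ t) (x y : ℝ) :
    (x - softThreshold t x) * (y - softThreshold t x) ≤ t * |y| - t * |softThreshold t x| := by
  have hres : (x - softThreshold t x) * y ≤ t * |y| :=
    calc (x - softThreshold t x) * y ≤ |x - softThreshold t x| * |y| := by
          rw [← abs_mul]; exact le_abs_self _
      _ ≤ t * |y| := mul_le_mul_of_nonneg_right (abs_sub_softThreshold_le ht x) (abs_nonneg y)
  linarith [sub_softThreshold_mul_softThreshold ht x]

end Real

theorem sum_sq_sub_le_of_sum_mul_sub_nonpos {ι : Type*} [Fintype ι] {a z : ι → ℝ} (w : ι → ℝ)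
    (h : ∑ i, (a i - z i) * (w i - z i) ≤ 0) :
    ∑ i, (z i - a i) ^ 2 ≤ ∑ i, (w i - a i) ^ 2 := by
  have expand : ∑ i, (w i - a i) ^ 2
      = ∑ i, (z i - a i) ^ 2 + ∑ i, (w i - z i) ^ 2 - 2 * ∑ i, (a i - z i) * (w i - z i) := by
    rw [mul_sum, ← sum_add_distrib, ← sum_sub_distrib]
    exact sum_congr rfl fun i _ => by ring
  have hsq : 0 ≤ ∑ i, (w i - z i) ^ 2 := sum_nonneg fun i _ => sq_nonneg _
  linarith

theorem sum_sub_softThreshold_mul_sub_le {ι : Type*} [Fintype ι] {t : ℝ} (ht : 0 ≤ t)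
    (a w : ι → ℝ) :
    ∑ i, (a i - Real.softThreshold t (a i)) * (w i - Real.softThreshold t (a i))
      ≤ t * (∑ i, |w i| - ∑ i, |Real.softThreshold t (a i)|) := by
  rw [mul_sub, mul_sum, mul_sum, ← sum_sub_distrib]
  exact sum_le_sum fun i _ => Real.sub_softThreshold_mul_sub_le ht (a i) (w i)

theorem l1_ball_projection_soft_threshold_general (n : ℕ) (a : Fin n → ℝ) (c : ℝ)
    (t : ℝ) (ht : 0 < t) (htc : ∑ i, max (|a i| - t) 0 = c)
    (z : Fin n → ℝ) (hz : z = fun i => Real.sign (a i) * max (|a i| - t) 0) :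
    (∑ i, |z i| ≤ c) ∧
    (∀ w : Fin n → ℝ, (∑ i, |w i| ≤ c) →
      ∑ i, (z i - a i) ^ 2 ≤ ∑ i, (w i - a i) ^ 2) ∧
    (∀ i, a i = 0 → z i = 0) := by
  change z = fun i => Real.softThreshold t (a i) at hz
  subst hz
  have hnorm : ∑ i, |Real.softThreshold t (a i)| = c := by
    simp only [Real.abs_softThreshold ht.le, htc]
  refine ⟨hnorm.le, fun w hw => ?_, fun i hi => by simp [hi, Real.softThreshold_zero]⟩
  apply sum_sq_sub_le_of_sum_mul_sub_nonpos
  calc _ ≤ t * (∑ i, |w i| - ∑ i, |Real.softThreshold t (a i)|) :=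
        sum_sub_softThreshold_mul_sub_le ht.le a w
    _ ≤ 0 := mul_nonpos_of_nonneg_of_nonpos ht.le (by linarith)

/-- Soft-thresholding gives the Euclidean projection onto the ℓ₁-ball, and it
preserves sparsity. -/
theorem l1_ball_projection_soft_threshold (n : ℕ) (a : Fin n → ℝ) (c : ℝ)
    (hc : 0 < c) (ha : c < ∑ i, |a i|)
    (t : ℝ) (ht : 0 < t) (htc : ∑ i, max (|a i| - t) 0 = c)
    (z : Fin n → ℝ) (hz : z = fun i => Real.sign (a i) * max (|a i| - t) 0) :
    (∑ i, |z i| ≤ c) ∧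
    (∀ w : Fin n → ℝ, (∑ i, |w i| ≤ c) →
      ∑ i, (z i - a i) ^ 2 ≤ ∑ i, (w i - a i) ^ 2) ∧
    (∀ i, a i = 0 → z i = 0) :=
  l1_ball_projection_soft_threshold_general n a c t ht htc z hz
end
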